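/- Let L be an orthomodular lattice admitting a strong set of states, let n ≥ 3, and let a : Fin n → L. Then the Godowski equation n-Go holds: ⨅_{i ∈ Fin n} (a(i) → a(i+1)) = ⨅_{i ∈ Fin n} (a(i+1) → a(i)), where the index i+1 is taken cyclically modulo n and x → y denotes x′ ∪ (x ∩ y). -/
import Mathlib


/-- An ortholattice: a bounded lattice with an orthocomplementation. -/
class Ortholattice (α : Type*) extends Lattice α, BoundedOrder α where
  ocompl : α → α
  sup_ocompl : ∀ a : α, a ⊔ ocompl a = ⊤
  inf_ocompl : ∀ a : α, a ⊓ ocompl a = ⊥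
  ocompl_anti : ∀ a b : α, a ≤ b → ocompl b ≤ ocompl a
  ocompl_ocompl : ∀ a : α, ocompl (ocompl a) = a

postfix:max "ᗮ" => Ortholattice.ocompl

/-- An orthomodular lattice. -/
class OrthomodularLattice (α : Type*) extends Ortholattice α where
  orthomodular : ∀ a b : α, a ≤ b → b = a ⊔ (aᗮ ⊓ b)

/-- The Sasaki hook `x → y = x′ ∪ (x ∩ y)`. -/
def oimp {α : Type*} [Ortholattice α] (x y : α) : α := xᗮ ⊔ (x ⊓ y)

/-- A (real-valued) state on an ortholattice. -/
structure OLState (α : Type*) [Ortholattice α] where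
  val : α → ℝ
  nonneg : ∀ a : α, 0 ≤ val a
  le_one : ∀ a : α, val a ≤ 1
  map_top : val ⊤ = 1
  additive : ∀ a b : α, a ≤ bᗮ → val (a ⊔ b) = val a + val b

/-- A strong set of states. -/
def IsStrongSet {α : Type*} [Ortholattice α] (S : Set (OLState α)) : Prop :=
  ∀ a b : α, (∀ m ∈ S, m.val a = 1 → m.val b = 1) → a ≤ b

lemma OLState.map_compl' {α : Type*} [Ortholattice α] (m : OLState α) (x : α) :
    m.val xᗮ = 1 - m.val x := by
  have h := m.additive x xᗮ (by rw [Ortholattice.ocompl_ocompl])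
  rw [Ortholattice.sup_ocompl, m.map_top] at h
  linarith

lemma OLState.mono' {α : Type*} [OrthomodularLattice α] (m : OLState α) {x y : α}
    (h : x ≤ y) : m.val x ≤ m.val y := by
  have hom := OrthomodularLattice.orthomodular x y h
  have hle : x ≤ (xᗮ ⊓ y)ᗮ := by
    have h1 : (xᗮ ⊓ y : α) ≤ xᗮ := inf_le_left
    have h2 := Ortholattice.ocompl_anti _ _ h1
    rwa [Ortholattice.ocompl_ocompl] at h2
  have hadd := m.additive x (xᗮ ⊓ y) hle
  rw [← hom] at hadd
  have := m.nonneg (xᗮ ⊓ y)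
  linarith

lemma OLState.map_oimp' {α : Type*} [Ortholattice α] (m : OLState α) (x y : α) :
    m.val (oimp x y) = 1 - m.val x + m.val (x ⊓ y) := by
  have hle : xᗮ ≤ (x ⊓ y)ᗮ := Ortholattice.ocompl_anti _ _ inf_le_left
  rw [oimp, m.additive xᗮ (x ⊓ y) hle, m.map_compl']

lemma OLState.oimp_one {α : Type*} [OrthomodularLattice α] (m : OLState α) {x y : α}
    (h : m.val (oimp x y) = 1) :
    m.val (x ⊓ y) = m.val x ∧ m.val x ≤ m.val y := by
  have h2 := m.map_oimp' x y
  have hm := m.mono' (inf_le_right : x ⊓ y ≤ y)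
  constructor <;> linarith

lemma mono_periodic_const (f : ℕ → ℝ) (n : ℕ) (hn : 0 < n)
    (hmono : ∀ k, f k ≤ f (k + 1)) (hper : ∀ k, f (k + n) = f k) (k : ℕ) :
    f (k + 1) = f k := by
  have chain : ∀ l k, f k ≤ f (k + l) := by
    intro l
    induction l with
    | zero => intro k; simp
    | succ l ih =>
      intro k
      calc f k ≤ f (k + l) := ih k
        _ ≤ f (k + l + 1) := hmono _
        _ = f (k + (l + 1)) := by ring_nf
  have h1 : f (k + 1) ≤ f (k + n) := by
    have h2 := chain (n - 1) (k + 1)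
    have hh : k + 1 + (n - 1) = k + n := by omega
    rwa [hh] at h2
  have := hper k
  have := hmono k
  linarith

theorem godowski_nGo {α : Type*} [OrthomodularLattice α]
    (S : Set (OLState α)) (hS : IsStrongSet S)
    (n : ℕ) (hn : 3 ≤ n) (a : Fin n → α) :
    Finset.univ.inf
        (fun i : Fin n => oimp (a i) (a ⟨(i.val + 1) % n, Nat.mod_lt _ (by omega)⟩)) =
      Finset.univ.inf
        (fun i : Fin n => oimp (a ⟨(i.val + 1) % n, Nat.mod_lt _ (by omega)⟩) (a i)) := by
  have hn0 : 0 < n := by omega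
  set succ : Fin n → Fin n := fun i => ⟨(i.val + 1) % n, Nat.mod_lt _ hn0⟩ with hsucc
  have hL : Finset.univ.inf
        (fun i : Fin n => oimp (a i) (a ⟨(i.val + 1) % n, Nat.mod_lt _ (by omega)⟩)) =
      Finset.univ.inf (fun i : Fin n => oimp (a i) (a (succ i))) := rfl
  have hR : Finset.univ.inf
        (fun i : Fin n => oimp (a ⟨(i.val + 1) % n, Nat.mod_lt _ (by omega)⟩) (a i)) =
      Finset.univ.inf (fun i : Fin n => oimp (a (succ i)) (a i)) := rfl
  rw [hL, hR]
  have hidx : ∀ k : ℕ, succ ⟨k % n, Nat.mod_lt _ hn0⟩ = ⟨(k + 1) % n, Nat.mod_lt _ hn0⟩ := by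
    intro k
    apply Fin.ext
    simp [hsucc, Nat.mod_add_mod]
  have hself : ∀ j : Fin n, (⟨j.val % n, Nat.mod_lt _ hn0⟩ : Fin n) = j := by
    intro j
    apply Fin.ext
    simp [Nat.mod_eq_of_lt j.isLt]
  apply le_antisymm
  · apply Finset.le_inf
    intro j _
    apply hS
    intro m _ hmL
    have hterm : ∀ i : Fin n, m.val (oimp (a i) (a (succ i))) = 1 := by
      intro i
      refine le_antisymm (m.le_one _) ?_
      calc (1:ℝ) = m.val _ := hmL.symm
        _ ≤ _ := m.mono' (Finset.inf_le (Finset.mem_univ i))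
    set f : ℕ → ℝ := fun k => m.val (a ⟨k % n, Nat.mod_lt _ hn0⟩) with hf
    have hmono : ∀ k, f k ≤ f (k + 1) := by
      intro k
      have h1 := (m.oimp_one (hterm ⟨k % n, Nat.mod_lt _ hn0⟩)).2
      rwa [hidx k] at h1
    have hper : ∀ k, f (k + n) = f k := by
      intro k; simp [hf, Nat.add_mod_right]
    have hconst := mono_periodic_const f n hn0 hmono hper
    have heq : m.val (a (succ j)) = m.val (a j) := by
      have h1 := hconst j.val
      simp only [hf] at h1
      rwa [hself j, show (⟨(j.val + 1) % n, Nat.mod_lt _ hn0⟩ : Fin n) = succ j from rfl] at h1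
    rw [m.map_oimp', show a (succ j) ⊓ a j = a j ⊓ a (succ j) from inf_comm .. ,
      (m.oimp_one (hterm j)).1]
    linarith
  · apply Finset.le_inf
    intro j _
    apply hS
    intro m _ hmL
    have hterm : ∀ i : Fin n, m.val (oimp (a (succ i)) (a i)) = 1 := by
      intro i
      refine le_antisymm (m.le_one _) ?_
      calc (1:ℝ) = m.val _ := hmL.symm
        _ ≤ _ := m.mono' (Finset.inf_le (Finset.mem_univ i))
    set f : ℕ → ℝ := fun k => m.val (a ⟨k % n, Nat.mod_lt _ hn0⟩) with hf
    have hmono : ∀ k, (fun k => -(f k)) k ≤ (fun k => -(f k)) (k + 1) := by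
      intro k
      have h1 := (m.oimp_one (hterm ⟨k % n, Nat.mod_lt _ hn0⟩)).2
      rw [hidx k] at h1
      simp only [hf] at h1 ⊢
      linarith
    have hper : ∀ k, (fun k => -(f k)) (k + n) = (fun k => -(f k)) k := by
      intro k; simp [hf, Nat.add_mod_right]
    have hconst := mono_periodic_const _ n hn0 hmono hper
    have heq : m.val (a (succ j)) = m.val (a j) := by
      have h1 := hconst j.val
      simp only [hf, neg_inj] at h1
      rwa [hself j, show (⟨(j.val + 1) % n, Nat.mod_lt _ hn0⟩ : Fin n) = succ j from rfl] at h1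
    rw [m.map_oimp', show a j ⊓ a (succ j) = a (succ j) ⊓ a j from inf_comm .. ,
      (m.oimp_one (hterm j)).1]
    linarith
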